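/- Let d ≥ 1 and a > 0. Then for all x, y ∈ ℝ^d, sup_{z ∈ Q_2(x)} e^{−a|z−y|²} ≤ 2^{d−1} e^{4ad} · Σ_{m ∈ {−1,0,1}^d} e^{−a|x+m−y|²}. -/

import Mathlib

/-! For each coordinate, shifting `x i - y i` by `-1`, `0` or `1` towards the origin produces a
point that is at most `1` farther from the origin, in squared distance, than any `z i - y i` with
`|z i - x i| ≤ 1`. Hence one lattice neighbour `x + m` satisfies
`‖x + m - y‖² ≤ ‖z - y‖² + d`, and its Gaussian term alone already dominates
`e^{-a‖z - y‖²}` up to the factor `e^{ad}`. -/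

lemma exists_shift_sq_le_sq_add_one {s t : ℝ} (h : |t - s| ≤ 1) :
    ∃ k ∈ ({-1, 0, 1} : Finset ℤ), (s + k) ^ 2 ≤ t ^ 2 + 1 := by
  obtain ⟨hlo, hhi⟩ := abs_le.mp h
  by_cases hs : 1 ≤ s
  · exact ⟨-1, by simp, by push_cast; nlinarith⟩
  by_cases hs' : s ≤ -1
  · exact ⟨1, by simp, by push_cast; nlinarith⟩
  · exact ⟨0, by simp, by push_cast; nlinarith⟩

lemma exists_lattice_neighbor_norm_sq_le {ι : Type*} [Fintype ι] [DecidableEq ι]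
    {x y z : EuclideanSpace ℝ ι} (hz : ∀ i, |z i - x i| ≤ 1) :
    ∃ m ∈ Fintype.piFinset (fun _ : ι => ({-1, 0, 1} : Finset ℤ)),
      ‖x + WithLp.toLp 2 (fun i => (m i : ℝ)) - y‖ ^ 2 ≤ ‖z - y‖ ^ 2 + Fintype.card ι := by
  choose m hm hsq using fun i =>
    exists_shift_sq_le_sq_add_one (s := x i - y i) (t := z i - y i) (by simpa using hz i)
  refine ⟨m, Fintype.mem_piFinset.mpr hm, ?_⟩
  simp only [EuclideanSpace.real_norm_sq_eq, PiLp.sub_apply, PiLp.add_apply]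
  calc ∑ i, (x i + m i - y i) ^ 2 ≤ ∑ i, ((z i - y i) ^ 2 + 1) :=
        Finset.sum_le_sum fun i _ => by linarith [hsq i]
    _ = ∑ i, (z i - y i) ^ 2 + Fintype.card ι := by simp [Finset.sum_add_distrib]

theorem lattice_gaussian_bound_around
    (d : ℕ) (a : ℝ) (ha : 0 < a)
    (x y : EuclideanSpace ℝ (Fin d)) :
    ∀ z : EuclideanSpace ℝ (Fin d), (∀ i, |z i - x i| ≤ 1) →
      Real.exp (-a * ‖z - y‖ ^ 2) ≤
        2 ^ (d - 1) * Real.exp (4 * a * d) *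
          ∑ m ∈ Fintype.piFinset (fun _ : Fin d => ({-1, 0, 1} : Finset ℤ)),
            Real.exp (-a * ‖x + (show EuclideanSpace ℝ (Fin d) from WithLp.toLp 2 (fun i => (m i : ℝ))) - y‖ ^ 2) := by
  intro z hz
  obtain ⟨m, hm, hnorm⟩ := exists_lattice_neighbor_norm_sq_le (y := y) hz
  rw [Fintype.card_fin] at hnorm
  set S := ∑ m ∈ Fintype.piFinset (fun _ : Fin d => ({-1, 0, 1} : Finset ℤ)),
    Real.exp (-a * ‖x + (show EuclideanSpace ℝ (Fin d) from WithLp.toLp 2 (fun i => (m i : ℝ))) - y‖ ^ 2)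
  have hterm_le_sum : Real.exp (-a * ‖x + WithLp.toLp 2 (fun i => (m i : ℝ)) - y‖ ^ 2) ≤ S :=
    Finset.single_le_sum (f := fun m : Fin d → ℤ =>
      Real.exp (-a * ‖x + WithLp.toLp 2 (fun i => (m i : ℝ)) - y‖ ^ 2))
      (fun _ _ => (Real.exp_pos _).le) hm
  calc Real.exp (-a * ‖z - y‖ ^ 2)
      ≤ Real.exp (4 * a * d) * Real.exp (-a * ‖x + WithLp.toLp 2 (fun i => (m i : ℝ)) - y‖ ^ 2) := by
        rw [← Real.exp_add, Real.exp_le_exp]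
        nlinarith [mul_le_mul_of_nonneg_left hnorm ha.le, (Nat.cast_nonneg d : (0 : ℝ) ≤ d)]
    _ ≤ Real.exp (4 * a * d) * S := by gcongr
    _ ≤ 2 ^ (d - 1) * Real.exp (4 * a * d) * S :=
        mul_le_mul_of_nonneg_right (le_mul_of_one_le_left (Real.exp_pos _).le
          (one_le_pow₀ (by norm_num))) ((Real.exp_pos _).le.trans hterm_le_sum)
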